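/- arXiv:0807.4277 — 5 statements merged into one kernel-verified Lean document; each statement's English description precedes it below -/
import Mathlib

section
/- Let V be a finite-dimensional vector space over a field K with ordered basis e_1, …, e_m, and let d : V → V be a linear map which is triangular (d(e_i) ∈ span{e_j : j > i} for every i) and exact (ker d = range d). Then the fixed-point-free involution τ of {1, …, m} produced by a triangular basis change normalizing d is unique: if τ and τ' are fixed-point-free involutions of {1, …, m} such that for each of them there is a triangular basis change e'_i = e_i + Σ_{j>i} b_{ij} e_j with d(e'_i) = e'_{τ(i)} when τ(i) > i and d(e'_i) = 0 when τ(i) < i, then τ = τ'. -/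
/-!
A triangular basis change preserves the flag `F_{≥i} = span {e_j | i ≤ j}`. In a normalizing
basis `e'` one has `d F_{≥i} = d F_{>i} + K ∙ d e'_i`, where `d F_{>i}` is spanned by the vectors
`e'_{τ j}` with `i < j`. Linear independence of `e'` then gives
`d F_{≥i} ≤ d F_{>i} + F_{>k} ↔ (i < τ i → k < τ i)`, a condition on `d` and the flag of `e`
alone. It pins down `τ i` whenever `i < τ i`, and the involution property does the rest.
-/

open Submodule Finset

section TriangularFlag

variable {K V ι : Type*} [Field K] [AddCommGroup V] [Module K V] [LinearOrder ι]

section TriangularChange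

variable [LocallyFiniteOrderTop ι]

def triangularChange (e : ι → V) (b : ι → ι → K) (i : ι) : V :=
  e i + ∑ j ∈ Ioi i, b i j • e j

theorem span_triangularChange_image [WellFoundedGT ι] (e : ι → V) (b : ι → ι → K)
    {S : Set ι} (hS : IsUpperSet S) :
    span K (triangularChange e b '' S) = span K (e '' S) := by
  apply le_antisymm <;> rw [span_le] <;> rintro _ ⟨j, hj, rfl⟩
  · refine add_mem (subset_span ⟨j, hj, rfl⟩) (sum_mem fun l hl => smul_mem _ _ ?_)
    exact subset_span ⟨l, hS (mem_Ioi.mp hl).le hj, rfl⟩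
  · induction j using WellFoundedGT.induction with
    | _ j ih =>
      have hej : e j = triangularChange e b j - ∑ l ∈ Ioi j, b j l • e l := by
        simp [triangularChange]
      rw [hej]
      refine sub_mem (subset_span ⟨j, hj, rfl⟩) (sum_mem fun l hl => smul_mem _ _ ?_)
      exact ih l (mem_Ioi.mp hl) (hS (mem_Ioi.mp hl).le hj)

theorem linearIndependent_triangularChange [Fintype ι] (e : Module.Basis ι K V)
    (b : ι → ι → K) : LinearIndependent K (triangularChange e b) := by
  refine linearIndependent_of_top_le_span_of_card_eq_finrank ?_
    (Module.finrank_eq_card_basis e).symm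
  rw [← Set.image_univ, span_triangularChange_image e b isUpperSet_univ, Set.image_univ,
    e.span_eq]

end TriangularChange

def IsNormalForm (d : V →ₗ[K] V) (v : ι → V) (τ : ι → ι) : Prop :=
  (∀ i, i < τ i → d (v i) = v (τ i)) ∧ ∀ i, τ i < i → d (v i) = 0

variable {d : V →ₗ[K] V} {v : ι → V} {τ : ι → ι}

theorem IsNormalForm.map_span_image_le (hd : IsNormalForm d v τ) (hfp : ∀ i, τ i ≠ i)
    (S : Set ι) : map d (span K (v '' S)) ≤ span K (v '' (τ '' S)) := by
  rw [map_span, span_le]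
  rintro _ ⟨_, ⟨j, hj, rfl⟩, rfl⟩
  rcases (hfp j).lt_or_gt with hlt | hlt
  · rw [hd.2 j hlt]; exact zero_mem _
  · rw [hd.1 j hlt]; exact subset_span ⟨τ j, ⟨j, hj, rfl⟩, rfl⟩

theorem IsNormalForm.map_span_Ici_le_iff (hd : IsNormalForm d v τ) (hv : LinearIndependent K v)
    (hτ : Function.Involutive τ) (hfp : ∀ i, τ i ≠ i) (i k : ι) :
    map d (span K (v '' Set.Ici i)) ≤ map d (span K (v '' Set.Ioi i)) ⊔ span K (v '' Set.Ioi k)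
      ↔ (i < τ i → k < τ i) := by
  rw [← Set.Ioi_insert, Set.image_insert_eq, span_insert, Submodule.map_sup, sup_le_iff,
    and_iff_left le_sup_left, map_span, Set.image_singleton, span_singleton_le_iff_mem]
  rcases (hfp i).lt_or_gt with hdown | hup
  · simp only [hd.2 i hdown, zero_mem, true_iff]
    exact fun hi => absurd hdown hi.not_gt
  · rw [hd.1 i hup, imp_iff_right hup]
    refine ⟨fun hmem => ?_, fun hk => mem_sup_right (subset_span ⟨τ i, hk, rfl⟩)⟩
    have hle : map d (span K (v '' Set.Ioi i)) ⊔ span K (v '' Set.Ioi k)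
        ≤ span K (v '' (τ '' Set.Ioi i ∪ Set.Ioi k)) := by
      rw [Set.image_union, span_union]
      exact sup_le_sup_right (hd.map_span_image_le hfp _) _
    by_contra hk
    refine hv.notMem_span_image ?_ (hle hmem)
    rintro (⟨j, hj, hji⟩ | hk')
    · exact (hτ.injective hji ▸ hj : i < i).false
    · exact hk hk'

theorem IsNormalForm.map_span_basis_Ici_le_iff [Fintype ι] [LocallyFiniteOrderTop ι]
    {e : Module.Basis ι K V} {b : ι → ι → K}
    (hd : IsNormalForm d (triangularChange e b) τ) (hτ : Function.Involutive τ)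
    (hfp : ∀ i, τ i ≠ i) (i k : ι) :
    map d (span K (e '' Set.Ici i)) ≤ map d (span K (e '' Set.Ioi i)) ⊔ span K (e '' Set.Ioi k)
      ↔ (i < τ i → k < τ i) := by
  simp only [← span_triangularChange_image e b (isUpperSet_Ici _),
    ← span_triangularChange_image e b (isUpperSet_Ioi _)]
  exact hd.map_span_Ici_le_iff (linearIndependent_triangularChange e b) hτ hfp i k

theorem Function.Involutive.eq_of_forall_lt_imp_lt_iff {τ τ' : ι → ι}
    (hτ : Function.Involutive τ) (hτ' : Function.Involutive τ') (hfp : ∀ i, τ i ≠ i)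
    (h : ∀ i k, (i < τ i → k < τ i) ↔ (i < τ' i → k < τ' i)) : τ = τ' := by
  have hup : ∀ i, i < τ i → τ' i = τ i := by
    intro i hi
    obtain ⟨hi', hle⟩ := Classical.not_imp.mp fun H => ((h i (τ i)).mpr H hi).false
    obtain ⟨-, hge⟩ := Classical.not_imp.mp fun H => ((h i (τ' i)).mp H hi').false
    exact le_antisymm (not_lt.mp hle) (not_lt.mp hge)
  funext i
  rcases (hfp i).lt_or_gt with hdown | hi
  · have hpair : τ' (τ i) = i := by simpa only [hτ i] using hup (τ i) (by rwa [hτ i])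
    rw [← hτ' (τ i), hpair]
  · exact (hup i hi).symm

end TriangularFlag

theorem stmt_1_general {K : Type*} [Field K] {V : Type*} [AddCommGroup V] [Module K V]
    {m : ℕ} (e : Module.Basis (Fin m) K V) (d : V →ₗ[K] V)
    (τ τ' : Fin m → Fin m)
    (hτinv : ∀ i, τ (τ i) = i) (hτfp : ∀ i, τ i ≠ i)
    (hτ'inv : ∀ i, τ' (τ' i) = i) (hτ'fp : ∀ i, τ' i ≠ i)
    (hτ : ∃ b : Fin m → Fin m → K,
      (∀ i, i < τ i →
        d (e i + ∑ j ∈ Finset.Ioi i, b i j • e j)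
          = e (τ i) + ∑ j ∈ Finset.Ioi (τ i), b (τ i) j • e j) ∧
      (∀ i, τ i < i →
        d (e i + ∑ j ∈ Finset.Ioi i, b i j • e j) = 0))
    (hτ' : ∃ b' : Fin m → Fin m → K,
      (∀ i, i < τ' i →
        d (e i + ∑ j ∈ Finset.Ioi i, b' i j • e j)
          = e (τ' i) + ∑ j ∈ Finset.Ioi (τ' i), b' (τ' i) j • e j) ∧
      (∀ i, τ' i < i →
        d (e i + ∑ j ∈ Finset.Ioi i, b' i j • e j) = 0)) :
    τ = τ' := by
  obtain ⟨b, hb⟩ := hτ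
  obtain ⟨b', hb'⟩ := hτ'
  refine Function.Involutive.eq_of_forall_lt_imp_lt_iff hτinv hτ'inv hτfp fun i k => ?_
  rw [← IsNormalForm.map_span_basis_Ici_le_iff (e := e) hb hτinv hτfp,
    ← IsNormalForm.map_span_basis_Ici_le_iff (e := e) hb' hτ'inv hτ'fp]

/-- Proposition 2.5 (uniqueness part): the fixed-point-free involution produced by
a triangular basis change normalizing a triangular exact differential is unique. -/
theorem stmt_1 {K : Type*} [Field K] {V : Type*} [AddCommGroup V] [Module K V]
    {m : ℕ} (e : Module.Basis (Fin m) K V) (d : V →ₗ[K] V)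
    (htri : ∀ i, d (e i) ∈ Submodule.span K (e '' {j | i < j}))
    (hexact : LinearMap.ker d = LinearMap.range d)
    (τ τ' : Fin m → Fin m)
    (hτinv : ∀ i, τ (τ i) = i) (hτfp : ∀ i, τ i ≠ i)
    (hτ'inv : ∀ i, τ' (τ' i) = i) (hτ'fp : ∀ i, τ' i ≠ i)
    (hτ : ∃ b : Fin m → Fin m → K,
      (∀ i, i < τ i →
        d (e i + ∑ j ∈ Finset.Ioi i, b i j • e j)
          = e (τ i) + ∑ j ∈ Finset.Ioi (τ i), b (τ i) j • e j) ∧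
      (∀ i, τ i < i →
        d (e i + ∑ j ∈ Finset.Ioi i, b i j • e j) = 0))
    (hτ' : ∃ b' : Fin m → Fin m → K,
      (∀ i, i < τ' i →
        d (e i + ∑ j ∈ Finset.Ioi i, b' i j • e j)
          = e (τ' i) + ∑ j ∈ Finset.Ioi (τ' i), b' (τ' i) j • e j) ∧
      (∀ i, τ' i < i →
        d (e i + ∑ j ∈ Finset.Ioi i, b' i j • e j) = 0)) :
    τ = τ' :=
  stmt_1_general e d τ τ' hτinv hτfp hτ'inv hτ'fp hτ hτ'
end

section
/- Let A be a symmetric real N×N matrix and b ∈ ℝ^N, and suppose the N×(N+1) block matrix [A b] has rank N. Let H be the (2N+1)×(2N+1) real symmetric matrix with block form H = [[A, 0, b], [0, −A, −b], [bᵀ, −bᵀ, 0]]. Then the kernel of H (as a linear map on ℝ^N × ℝ^N × ℝ) equals {(ξ, ξ, τ) : Aξ + τb = 0}, and this kernel is one-dimensional. -/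
/-!
Subtracting the first two block rows of `H (ξ, η, τ) = 0` gives `A (ξ - η) = 0`, and the last row
gives `bᵀ (ξ - η) = 0`. As `A` is symmetric, `ξ - η` is then a left null vector of `[A b]`, which
vanishes because `[A b]` has full row rank. Hence the kernel of `H` is the diagonal copy
`(ξ, τ) ↦ (ξ, ξ, τ)` of the kernel of `[A b]`, of dimension `(N + 1) - N = 1` by rank–nullity.
-/

open Matrix

namespace Matrix

variable {K m n : Type*} [Field K] [Fintype m] [Fintype n]

theorem vecMul_injective_of_rank_eq_card {M : Matrix m n K} (h : M.rank = Fintype.card m) :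
    Function.Injective M.vecMul :=
  vecMul_injective_iff.2 <| linearIndependent_iff_card_eq_finrank_span.2 <| by
    rw [← h, rank_eq_finrank_span_row]; rfl

omit [Fintype m] in
theorem finrank_ker_mulVecLin_add_rank (M : Matrix m n K) :
    Module.finrank K (LinearMap.ker M.mulVecLin) + M.rank = Fintype.card n := by
  rw [add_comm, rank, LinearMap.finrank_range_add_finrank_ker, Module.finrank_fintype_fun_eq_card]

section

variable {A : Matrix m n K} {b : m → K}

theorem eq_zero_of_vecMul_eq_zero_of_dotProduct_eq_zero
    (h : (fromCols A (replicateCol Unit b)).rank = Fintype.card m) {x : m → K}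
    (hA : x ᵥ* A = 0) (hb : x ⬝ᵥ b = 0) : x = 0 :=
  vecMul_injective_of_rank_eq_card h <| by
    simp only [vecMul_fromCols, hA, mulVec_replicateCol_eq_const, hb, zero_vecMul]
    ext (_ | _) <;> rfl

omit [Fintype m] in
theorem fromCols_replicateCol_mulVec (v : n ⊕ Unit → K) :
    fromCols A (replicateCol Unit b) *ᵥ v = A *ᵥ (v ∘ Sum.inl) + v (Sum.inr ()) • b := by
  ext i
  simp [mulVec, dotProduct, replicateCol, mul_comm]

theorem finrank_ker_fromCols_replicateCol
    (h : (fromCols A (replicateCol Unit b)).rank = Fintype.card m) :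
    Module.finrank K (LinearMap.ker (fromCols A (replicateCol Unit b)).mulVecLin) =
      Fintype.card n + 1 - Fintype.card m := by
  have := finrank_ker_mulVecLin_add_rank (fromCols A (replicateCol Unit b))
  rw [h, Fintype.card_sum, Fintype.card_unit] at this
  omega

end

theorem eq_of_mulVec_add_smul_eq_zero {A : Matrix n n K} {b : n → K} (hA : Aᵀ = A)
    (h : (fromCols A (replicateCol Unit b)).rank = Fintype.card n) {ξ η : n → K} {τ : K}
    (hξ : A *ᵥ ξ + τ • b = 0) (hη : A *ᵥ η + τ • b = 0) (hb : b ⬝ᵥ ξ = b ⬝ᵥ η) : ξ = η := by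
  refine sub_eq_zero.1 (eq_zero_of_vecMul_eq_zero_of_dotProduct_eq_zero h ?_ ?_)
  · rw [← mulVec_transpose, hA, mulVec_sub, sub_eq_zero, ← add_right_cancel_iff, hξ, hη]
  · rw [dotProduct_comm, dotProduct_sub, hb, sub_self]

end Matrix

section

variable (K n : Type*) [Field K]

def diagEmbedding : (n ⊕ Unit → K) →ₗ[K] (n → K) × (n → K) × K :=
  (LinearMap.funLeft K K Sum.inl).prod
    ((LinearMap.funLeft K K Sum.inl).prod (LinearMap.proj (Sum.inr ())))

@[simp]
theorem diagEmbedding_apply (v : n ⊕ Unit → K) :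
    diagEmbedding K n v = (v ∘ Sum.inl, v ∘ Sum.inl, v (Sum.inr ())) :=
  rfl

theorem diagEmbedding_injective : Function.Injective (diagEmbedding K n) := by
  intro v w h
  ext (i | ⟨⟩)
  · exact congrFun (congrArg Prod.fst h) i
  · exact congrArg (·.2.2) h

variable {K n} [Fintype n] {m : Type*} {A : Matrix m n K} {b : m → K}

theorem coe_map_diagEmbedding_ker_fromCols_replicateCol :
    ((LinearMap.ker (fromCols A (replicateCol Unit b)).mulVecLin).map (diagEmbedding K n) :
      Set ((n → K) × (n → K) × K)) = {p | p.1 = p.2.1 ∧ A *ᵥ p.1 + p.2.2 • b = 0} := by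
  ext ⟨ξ, η, τ⟩
  simp only [Set.mem_ofPred_eq]
  constructor
  · rintro ⟨v, hv, hvp⟩
    rw [diagEmbedding_apply, Prod.mk.injEq, Prod.mk.injEq] at hvp
    obtain ⟨rfl, rfl, rfl⟩ := hvp
    rw [SetLike.mem_coe, LinearMap.mem_ker, mulVecLin_apply, fromCols_replicateCol_mulVec] at hv
    exact ⟨rfl, hv⟩
  · rintro ⟨rfl, h⟩
    refine ⟨Sum.elim ξ fun _ => τ, ?_, rfl⟩
    rw [SetLike.mem_coe, LinearMap.mem_ker, mulVecLin_apply, fromCols_replicateCol_mulVec]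
    exact h

end

/-- Lemma 6.1 (kernel computation): for `A` symmetric with `[A b]` of full rank `N`,
the kernel of the Hessian block map
`H(ξ,η,τ) = (Aξ + τb, -Aη - τb, bᵀξ - bᵀη)` is the diagonal line
`{(ξ,ξ,τ) : Aξ + τb = 0}`, which is one-dimensional. -/
theorem stmt_4 {N : ℕ} (A : Matrix (Fin N) (Fin N) ℝ) (hA : Aᵀ = A) (b : Fin N → ℝ)
    (hrank : (Matrix.fromCols A (Matrix.replicateCol Unit b)).rank = N)
    (H : ((Fin N → ℝ) × (Fin N → ℝ) × ℝ) →ₗ[ℝ] ((Fin N → ℝ) × (Fin N → ℝ) × ℝ))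
    (hH : ∀ (ξ η : Fin N → ℝ) (τ : ℝ),
      H (ξ, η, τ) = (A.mulVec ξ + τ • b, -(A.mulVec η) - τ • b, b ⬝ᵥ ξ - b ⬝ᵥ η)) :
    (LinearMap.ker H : Set ((Fin N → ℝ) × (Fin N → ℝ) × ℝ))
        = {p | p.1 = p.2.1 ∧ A.mulVec p.1 + p.2.2 • b = 0} ∧
    Module.finrank ℝ (LinearMap.ker H) = 1 := by
  have hrank' : (fromCols A (replicateCol Unit b)).rank = Fintype.card (Fin N) := by
    rwa [Fintype.card_fin]
  have hker : (LinearMap.ker H : Set ((Fin N → ℝ) × (Fin N → ℝ) × ℝ))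
      = {p | p.1 = p.2.1 ∧ A *ᵥ p.1 + p.2.2 • b = 0} := by
    ext ⟨ξ, η, τ⟩
    simp only [SetLike.mem_coe, LinearMap.mem_ker, hH, Prod.mk_eq_zero, Set.mem_ofPred_eq,
      ← neg_add', neg_eq_zero, sub_eq_zero]
    constructor
    · rintro ⟨hξ, hη, hb⟩
      exact ⟨eq_of_mulVec_add_smul_eq_zero hA hrank' hξ hη hb, hξ⟩
    · rintro ⟨rfl, hξ⟩
      exact ⟨hξ, hξ, rfl⟩
  have hmap : LinearMap.ker H =
      (LinearMap.ker (fromCols A (replicateCol Unit b)).mulVecLin).map (diagEmbedding ℝ (Fin N)) :=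
    SetLike.coe_injective (hker.trans coe_map_diagEmbedding_ker_fromCols_replicateCol.symm)
  refine ⟨hker, ?_⟩
  rw [hmap, ← LinearEquiv.finrank_eq
      (Submodule.equivMapOfInjective _ (diagEmbedding_injective ℝ (Fin N)) _),
    finrank_ker_fromCols_replicateCol hrank', Fintype.card_fin, Nat.add_sub_cancel_left]
end

section
/- Let F : ℝ^N × ℝ → ℝ be twice continuously differentiable, let w(x,y,t) = F(x,t) − F(y,t) be the difference function, and let G : ℝ^N × ℝ → ℝ^N be the map G(x,t) = (∂F/∂x_1(x,t), …, ∂F/∂x_N(x,t)). Suppose G(x₀,t₀) = 0 and the derivative DG(x₀,t₀) : ℝ^N × ℝ → ℝ^N is surjective. Then (x₀, x₀, t₀) is a critical point of w, and the kernel of the Hessian of w at (x₀, x₀, t₀) — that is, the set of vectors u ∈ ℝ^N × ℝ^N × ℝ such that the second derivative of w at (x₀, x₀, t₀), viewed as a symmetric bilinear form, satisfies D²w(u, v) = 0 for all v — equals {(ξ, ξ, τ) : DG(x₀,t₀)(ξ, τ) = 0}, which is a one-dimensional subspace of ℝ^N × ℝ^N × ℝ. -/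
/-!
Write `w = F ∘ A - F ∘ B` with the linear projections `A (x, y, t) = (x, t)` and
`B (x, y, t) = (y, t)`. At the diagonal point both send `(x₀, x₀, t₀)` to `(x₀, t₀)`, so with
`H = D²F (x₀, t₀)` the Hessian of `w` is `(u, v) ↦ H (A u) (A v) - H (B u) (B v)`, and `Dw` vanishes
there because `DF (x₀, t₀)` kills the vertical directions (`G (x₀, t₀) = 0`).

For `u = (x, y, t)` in the kernel, testing against `v = (a, a, s)` gives `H (x, t) = H (y, t)`, i.e.
`H (x - y, 0) = 0`. By symmetry of `H`, the vertical vector `x - y` pairs to zero with everything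
under the vertical part `z ↦ (H z (eᵢ, 0))ᵢ` of `H`, which is `DG (x₀, t₀)`; surjectivity of `DG`
forces `x = y`. Testing against `v = (a, 0, 0)` then says `DG (x, t) = 0`. Conversely such `u`
are in the kernel. Rank–nullity makes `ker DG` a line in `ℝᴺ × ℝ`, and the kernel of the Hessian
is its image under `(ξ, τ) ↦ (ξ, ξ, τ)`.
-/

open ContinuousLinearMap Function Module

section Coordinates

variable {R E T : Type*} [Semiring R] [AddCommMonoid E] [Module R E] [AddCommMonoid T] [Module R T]

variable (R E T) in
def dupFst : E × T →ₗ[R] E × E × T := (LinearMap.fst R E T).prod LinearMap.id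

@[simp] theorem dupFst_apply (z : E × T) : dupFst R E T z = (z.1, z) := rfl

theorem dupFst_injective : Injective (dupFst R E T) := fun _ _ h => congrArg Prod.snd h

theorem mem_map_dupFst {K : Submodule R (E × T)} {u : E × E × T} :
    u ∈ K.map (dupFst R E T) ↔ u.1 = u.2.1 ∧ (u.1, u.2.2) ∈ K := by
  obtain ⟨x, y, t⟩ := u
  change _ ↔ x = y ∧ (x, t) ∈ K
  constructor
  · rintro ⟨z, hz, hzu⟩
    simp only [dupFst_apply, Prod.mk.injEq] at hzu
    obtain ⟨rfl, rfl⟩ := hzu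
    exact ⟨rfl, hz⟩
  · rintro ⟨rfl, hu⟩
    exact ⟨(x, t), hu, rfl⟩

variable [TopologicalSpace E] [TopologicalSpace T]

variable (R E T) in
def dropMiddle : E × E × T →L[R] E × T :=
  (fst R E (E × T)).prod ((snd R E T).comp (snd R E (E × T)))

@[simp] theorem dropMiddle_apply (u : E × E × T) : dropMiddle R E T u = (u.1, u.2.2) := rfl

end Coordinates

theorem LinearMap.exists_ker_eq_span_singleton {K V W : Type*} [Field K] [AddCommGroup V]
    [Module K V] [AddCommGroup W] [Module K W] [FiniteDimensional K V] (f : V →ₗ[K] W)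
    (hf : Surjective f) (hdim : finrank K V = finrank K W + 1) :
    ∃ ζ ≠ 0, LinearMap.ker f = K ∙ ζ := by
  have hker : finrank K (LinearMap.ker f) = 1 := by
    have := f.finrank_range_add_finrank_ker
    rw [LinearMap.range_eq_top.2 hf, finrank_top] at this
    omega
  obtain ⟨ζ, hζ, hζ0⟩ := Submodule.exists_mem_ne_zero_of_ne_bot fun (h : LinearMap.ker f = ⊥) => by
    rw [← Submodule.finrank_eq_zero, hker] at h
    exact one_ne_zero h
  exact ⟨ζ, hζ0, eq_span_singleton_of_mem_of_finrank_eq_one hker hζ hζ0⟩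

section Bilinear

variable {𝕜 E T F : Type*} [NontriviallyNormedField 𝕜] [NormedAddCommGroup E] [NormedSpace 𝕜 E]
  [NormedAddCommGroup T] [NormedSpace 𝕜 T] [NormedAddCommGroup F] [NormedSpace 𝕜 F]

theorem forall_apply_mk_zero_eq_zero_iff {ι : Type*} [Fintype ι] [DecidableEq ι]
    (φ : (ι → 𝕜) × T →L[𝕜] F) :
    (∀ a, φ (a, 0) = 0) ↔ (fun i => φ (Pi.single i 1, 0)) = 0 := by
  refine ⟨fun h => funext fun i => h _, fun h a => ?_⟩
  have : (φ.comp (inl 𝕜 (ι → 𝕜) T) : (ι → 𝕜) →ₗ[𝕜] F) = 0 :=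
    (Pi.basisFun 𝕜 ι).ext fun i => by simpa using congrFun h i
  simpa using LinearMap.congr_fun this a

theorem eq_zero_of_forall_apply_mk_zero_eq_zero {ι X : Type*} [Fintype ι] [DecidableEq ι]
    [NormedAddCommGroup X] [NormedSpace 𝕜 X] (H : X →L[𝕜] (ι → 𝕜) × T →L[𝕜] 𝕜)
    (hH : Surjective fun z i => H z (Pi.single i 1, 0)) {δ : ι → 𝕜}
    (hδ : ∀ z, H z (δ, 0) = 0) : δ = 0 := by
  funext i
  obtain ⟨z, hz⟩ := hH (Pi.single i 1)
  have : ((H z).comp (inl 𝕜 (ι → 𝕜) T) : (ι → 𝕜) →ₗ[𝕜] 𝕜) = LinearMap.proj i :=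
    (Pi.basisFun 𝕜 ι).ext fun j => by simpa [Pi.single_apply, eq_comm] using congrFun hz j
  simpa [hδ] using (LinearMap.congr_fun this δ).symm

theorem forall_apply_sub_apply_eq_zero_iff (H : E × T →L[𝕜] E × T →L[𝕜] F)
    (hsymm : ∀ z z', H z z' = H z' z) (hnd : ∀ δ, (∀ z, H z (δ, 0) = 0) → δ = 0)
    (u : E × E × T) :
    (∀ v : E × E × T, H (u.1, u.2.2) (v.1, v.2.2) - H u.2 v.2 = 0) ↔
      u.1 = u.2.1 ∧ ∀ a, H (u.1, u.2.2) (a, 0) = 0 := by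
  obtain ⟨x, y, t⟩ := u
  change (∀ v : E × E × T, H (x, t) (v.1, v.2.2) - H (y, t) v.2 = 0) ↔
    x = y ∧ ∀ a, H (x, t) (a, 0) = 0
  constructor
  · intro h
    have hxy : H (x, t) = H (y, t) := ext fun a => sub_eq_zero.1 (h (a.1, a.1, a.2))
    refine ⟨sub_eq_zero.1 (hnd _ fun z => ?_), fun a => ?_⟩
    · rw [hsymm, show ((x - y, 0) : E × T) = (x, t) - (y, t) by simp, map_sub, hxy, sub_self,
        zero_apply]
    · simpa [Prod.mk_zero_zero] using h (a, 0, 0)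
  · rintro ⟨rfl, hx⟩ ⟨a, b, s⟩
    simpa [← map_sub] using hx (a - b)

end Bilinear

section Calculus

variable {𝕜 X P F : Type*} [NontriviallyNormedField 𝕜] [NormedAddCommGroup X] [NormedSpace 𝕜 X]
  [NormedAddCommGroup P] [NormedSpace 𝕜 P] [NormedAddCommGroup F] [NormedSpace 𝕜 F]

theorem fderiv_sub_comp_clm {f : X → F} (L M : P →L[𝕜] X) {p : P}
    (hL : DifferentiableAt 𝕜 f (L p)) (hM : DifferentiableAt 𝕜 f (M p)) :
    fderiv 𝕜 (fun p => f (L p) - f (M p)) p =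
      (fderiv 𝕜 f (L p)).comp L - (fderiv 𝕜 f (M p)).comp M :=
  ((hL.hasFDerivAt.comp p L.hasFDerivAt).sub (hM.hasFDerivAt.comp p M.hasFDerivAt)).fderiv

theorem fderiv_fderiv_sub_comp_clm_apply {f : X → F} (hf : ContDiff 𝕜 2 f) (L M : P →L[𝕜] X)
    (p u v : P) :
    fderiv 𝕜 (fderiv 𝕜 fun p => f (L p) - f (M p)) p u v =
      fderiv 𝕜 (fderiv 𝕜 f) (L p) (L u) (L v) - fderiv 𝕜 (fderiv 𝕜 f) (M p) (M u) (M v) := by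
  have h := iteratedFDeriv_sub_apply (x := p) (i := 2) (hf.comp L.contDiff).contDiffAt
    (hf.comp M.contDiff).contDiffAt
  rw [L.iteratedFDeriv_comp_right hf _ le_rfl, M.iteratedFDeriv_comp_right hf _ le_rfl] at h
  change fderiv 𝕜 (fderiv 𝕜 (f ∘ L - f ∘ M)) p u v = _
  simpa [iteratedFDeriv_two_apply] using congr($h ![u, v])

theorem fderiv_pi_clm_apply {ι Y : Type*} [Fintype ι] [NormedAddCommGroup Y] [NormedSpace 𝕜 Y]
    {Φ : X → Y →L[𝕜] F} {y : ι → Y} {q : X} (hΦ : DifferentiableAt 𝕜 Φ q) (z : X) :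
    fderiv 𝕜 (fun p i => Φ p (y i)) q z = fun i => fderiv 𝕜 Φ q z (y i) := by
  rw [fderiv_pi fun i => hΦ.clm_apply (differentiableAt_const (𝕜 := 𝕜) (y i))]
  funext i
  simp [fderiv_clm_apply hΦ (differentiableAt_const (𝕜 := 𝕜) _)]

end Calculus

/-- Lemma 6.1 in analytic form: at a point of the fiberwise critical set where the
transversality (regular value) assumption holds, the diagonal point
`(x₀,x₀,t₀)` is a critical point of the difference function `w`, and the kernel
of the Hessian of `w` there is exactly the diagonal of the kernel of `DG`,
a one-dimensional subspace. -/
theorem stmt_7 {N : ℕ} (F : (Fin N → ℝ) × ℝ → ℝ) (hF : ContDiff ℝ 2 F)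
    (w : (Fin N → ℝ) × (Fin N → ℝ) × ℝ → ℝ)
    (hw : ∀ x y t, w (x, y, t) = F (x, t) - F (y, t))
    (G : (Fin N → ℝ) × ℝ → (Fin N → ℝ))
    (hG : ∀ p i, G p i = fderiv ℝ F p (Pi.single i 1, 0))
    (x₀ : Fin N → ℝ) (t₀ : ℝ)
    (hcrit : G (x₀, t₀) = 0)
    (hsurj : Function.Surjective (fderiv ℝ G (x₀, t₀))) :
    fderiv ℝ w (x₀, x₀, t₀) = 0 ∧
    {u : (Fin N → ℝ) × (Fin N → ℝ) × ℝ |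
        ∀ v, fderiv ℝ (fderiv ℝ w) (x₀, x₀, t₀) u v = 0}
      = {u : (Fin N → ℝ) × (Fin N → ℝ) × ℝ |
          u.1 = u.2.1 ∧ fderiv ℝ G (x₀, t₀) (u.1, u.2.2) = 0} ∧
    ∃ u₀ : (Fin N → ℝ) × (Fin N → ℝ) × ℝ, u₀ ≠ 0 ∧
      {u : (Fin N → ℝ) × (Fin N → ℝ) × ℝ |
          ∀ v, fderiv ℝ (fderiv ℝ w) (x₀, x₀, t₀) u v = 0}
        = (Submodule.span ℝ {u₀} : Set ((Fin N → ℝ) × (Fin N → ℝ) × ℝ)) := by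
  set H := fderiv ℝ (fderiv ℝ F) (x₀, t₀)
  have hF1 : Differentiable ℝ F := hF.differentiable (by norm_num)
  have hw_eq : w = fun p => F (dropMiddle ℝ (Fin N → ℝ) ℝ p) - F (snd ℝ _ _ p) :=
    funext fun ⟨x, y, t⟩ => hw x y t
  have hDG : ∀ z, fderiv ℝ G (x₀, t₀) z = fun i => H z (Pi.single i 1, 0) := by
    rw [show G = fun p i => fderiv ℝ F p (Pi.single i 1, 0) from funext₂ hG]
    exact fderiv_pi_clm_apply ((hF.fderiv_right (m := 1) le_rfl).differentiable one_ne_zero _)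
  have hvert : ∀ a, fderiv ℝ F (x₀, t₀) (a, 0) = 0 :=
    (forall_apply_mk_zero_eq_zero_iff _).2 (funext (hG _) ▸ hcrit)
  have hcritw : fderiv ℝ w (x₀, x₀, t₀) = 0 := by
    refine ContinuousLinearMap.ext fun ⟨a, b, s⟩ => ?_
    rw [hw_eq, fderiv_sub_comp_clm _ _ (hF1 _) (hF1 _)]
    simpa [← map_sub] using hvert (a - b)
  have hker : {u : (Fin N → ℝ) × (Fin N → ℝ) × ℝ |
        ∀ v, fderiv ℝ (fderiv ℝ w) (x₀, x₀, t₀) u v = 0}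
      = {u | u.1 = u.2.1 ∧ fderiv ℝ G (x₀, t₀) (u.1, u.2.2) = 0} := by
    ext u
    rw [Set.mem_ofPred_eq, Set.mem_ofPred_eq, hw_eq]
    simp only [fderiv_fderiv_sub_comp_clm_apply hF]
    simp only [dropMiddle_apply, coe_snd']
    rw [forall_apply_sub_apply_eq_zero_iff H
      (hF.contDiffAt.isSymmSndFDerivAt (by simp))
      (fun δ => eq_zero_of_forall_apply_mk_zero_eq_zero H (by simpa [← funext hDG] using hsurj)),
      hDG, forall_apply_mk_zero_eq_zero_iff]
  obtain ⟨ζ, hζ0, hζ⟩ := LinearMap.exists_ker_eq_span_singleton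
    (fderiv ℝ G (x₀, t₀) : (Fin N → ℝ) × ℝ →ₗ[ℝ] Fin N → ℝ) hsurj (by simp)
  refine ⟨hcritw, hker, dupFst ℝ _ ℝ ζ, (map_ne_zero_iff _ dupFst_injective).2 hζ0, ?_⟩
  rw [hker, ← Set.image_singleton, ← Submodule.map_span, ← hζ]
  ext u
  simp only [Set.mem_ofPred_eq, SetLike.mem_coe, mem_map_dupFst, LinearMap.mem_ker]
  rfl
end

section
/- Let N ≥ 1 and let F : ℝ^N × ℝ → ℝ be a C^∞ function such that F(x,t) = x₁ for all (x,t) outside some compact subset of ℝ^N × ℝ. Let w : ℝ^N × ℝ^N × ℝ → ℝ be the difference function w(x,y,t) = F(x,t) − F(y,t). Then there exist a C^∞ diffeomorphism φ of ℝ^N × ℝ^N × ℝ onto itself of the form φ(x,y,t) = (Φ(x,y,t), t) for some smooth Φ : ℝ^N × ℝ^N × ℝ → ℝ^N × ℝ^N (i.e. φ preserves the t-coordinate), and a compact subset K ⊆ ℝ^N × ℝ^N × ℝ, such that w(φ(x,y,t)) = x₁ − y₁ for all (x,y,t) ∉ K. -/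
/-- The technical Proposition of Section 6 (Proposition 6.4): the difference
function `w` of a linear at infinity generating family `F` (with `F(x,t) = x₁`
outside a compact set) can be straightened to `x₁ - y₁` at infinity by a smooth
fiber preserving diffeomorphism of `ℝ^N × ℝ^N × ℝ`. -/
theorem stmt_8 {N : ℕ} (hN : 0 < N) (F : (Fin N → ℝ) × ℝ → ℝ)
    (hF : ContDiff ℝ (⊤ : ℕ∞) F)
    (hlin : ∃ K : Set ((Fin N → ℝ) × ℝ), IsCompact K ∧
      ∀ p ∉ K, F p = p.1 ⟨0, hN⟩)
    (w : (Fin N → ℝ) × (Fin N → ℝ) × ℝ → ℝ)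
    (hw : ∀ x y t, w (x, y, t) = F (x, t) - F (y, t)) :
    ∃ φ ψ : (Fin N → ℝ) × (Fin N → ℝ) × ℝ → (Fin N → ℝ) × (Fin N → ℝ) × ℝ,
      ContDiff ℝ (⊤ : ℕ∞) φ ∧ ContDiff ℝ (⊤ : ℕ∞) ψ ∧
      (∀ p, ψ (φ p) = p) ∧ (∀ p, φ (ψ p) = p) ∧
      (∀ p, (φ p).2.2 = p.2.2) ∧
      ∃ K : Set ((Fin N → ℝ) × (Fin N → ℝ) × ℝ), IsCompact K ∧
        ∀ p ∉ K, w (φ p) = p.1 ⟨0, hN⟩ - p.2.1 ⟨0, hN⟩ := by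
  classical
  obtain ⟨K₀, hK₀c, hK₀⟩ := hlin
  set i0 : Fin N := ⟨0, hN⟩ with hi0
  set e : Fin N → ℝ := Pi.single i0 (1:ℝ) with he
  -- the compactly supported part of F
  set g : (Fin N → ℝ) × ℝ → ℝ := fun q => F q - q.1 i0 with hgdef
  have hg : ContDiff ℝ (⊤ : ℕ∞) g := by
    apply hF.sub
    exact ((ContinuousLinearMap.proj i0 : (Fin N → ℝ) →L[ℝ] ℝ).comp
      (ContinuousLinearMap.fst ℝ (Fin N → ℝ) ℝ)).contDiff
  have hFg : ∀ q : (Fin N → ℝ) × ℝ, F q = q.1 i0 + g q := by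
    intro q; simp [hgdef]
  -- radius R containing K₀
  obtain ⟨R₀, hR₀⟩ := hK₀c.isBounded.subset_closedBall 0
  set R : ℝ := max R₀ 0 with hRdef
  have hR0 : 0 ≤ R := le_max_right _ _
  have hg0 : ∀ q : (Fin N → ℝ) × ℝ, R < ‖q‖ → g q = 0 := by
    intro q hq
    have hq' : q ∉ K₀ := by
      intro hqK
      have := hR₀ hqK
      rw [Metric.mem_closedBall, dist_zero_right] at this
      have : ‖q‖ ≤ R := this.trans (le_max_left _ _)
      linarith
    simp [hgdef, hK₀ q hq']
  -- bound for |g|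
  obtain ⟨C₀, hC₀⟩ := (isCompact_closedBall (0 : (Fin N → ℝ) × ℝ) R).exists_bound_of_continuousOn
    hg.continuous.continuousOn
  set C : ℝ := max C₀ 0 with hCdef
  have hC0 : 0 ≤ C := le_max_right _ _
  have hC : ∀ q, ‖g q‖ ≤ C := by
    intro q
    by_cases hq : q ∈ Metric.closedBall (0 : (Fin N → ℝ) × ℝ) R
    · exact (hC₀ q hq).trans (le_max_left _ _)
    · rw [Metric.mem_closedBall, dist_zero_right, not_le] at hq
      simp [hg0 q hq, hC0]
  have hee : ‖e‖ ≤ 1 := by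
    rw [pi_norm_le_iff_of_nonneg (by norm_num)]
    intro j
    by_cases hj : j = i0
    · simp [he, hj]
    · simp [he, Pi.single_eq_of_ne hj]
  have hfst : ∀ (z : Fin N → ℝ) (s : ℝ), ‖z‖ ≤ ‖((z, s) : (Fin N → ℝ) × ℝ)‖ := by
    intro z s
    have h : ‖((z, s) : (Fin N → ℝ) × ℝ)‖ = max ‖z‖ ‖s‖ := rfl
    rw [h]; exact le_max_left _ _
  have hsnd : ∀ (z : Fin N → ℝ) (s : ℝ), ‖s‖ ≤ ‖((z, s) : (Fin N → ℝ) × ℝ)‖ := by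
    intro z s
    have h : ‖((z, s) : (Fin N → ℝ) × ℝ)‖ = max ‖z‖ ‖s‖ := rfl
    rw [h]; exact le_max_right _ _
  have hgse : ∀ q : (Fin N → ℝ) × ℝ, ‖g q • e‖ ≤ C := by
    intro q
    calc ‖g q • e‖ = ‖g q‖ * ‖e‖ := norm_smul _ _
    _ ≤ C * 1 := mul_le_mul (hC q) hee (norm_nonneg _) hC0
    _ = C := mul_one _
  -- the maps
  refine ⟨fun p => (p.1 + g (p.2.1 + g (p.1, p.2.2) • e, p.2.2) • e,
      p.2.1 + g (p.1, p.2.2) • e, p.2.2),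
    fun q => (q.1 - g (q.2.1, q.2.2) • e,
      q.2.1 - g (q.1 - g (q.2.1, q.2.2) • e, q.2.2) • e, q.2.2),
    ?_, ?_, ?_, ?_, ?_, ?_⟩
  · fun_prop
  · fun_prop
  · intro p; simp
  · intro p; simp
  · intro p; rfl
  · refine ⟨Metric.closedBall 0 (R + C + 1), isCompact_closedBall _ _, ?_⟩
    intro p hp
    rw [Metric.mem_closedBall, dist_zero_right, not_le] at hp
    obtain ⟨x, y, t⟩ := p
    show w (x + g (y + g (x, t) • e, t) • e, y + g (x, t) • e, t) = x i0 - y i0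
    set a : ℝ := g (x, t) with ha
    set y' : Fin N → ℝ := y + a • e with hy'
    set b : ℝ := g (y', t) with hb
    set x' : Fin N → ℝ := x + b • e with hx'
    have hp' : R + C + 1 < ‖x‖ ∨ R + C + 1 < ‖y‖ ∨ R + C + 1 < ‖t‖ := by
      have hn : ‖((x, y, t) : (Fin N → ℝ) × (Fin N → ℝ) × ℝ)‖
          = max ‖x‖ (max ‖y‖ ‖t‖) := rfl
      rw [hn] at hp
      rcases lt_max_iff.mp hp with h | h
      · exact Or.inl h
      · rcases lt_max_iff.mp h with h | h
        · exact Or.inr (Or.inl h)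
        · exact Or.inr (Or.inr h)
    -- key claim : g (x', t) = g (x, t)
    have key : g (x', t) = a := by
      rcases hp' with hx | hy | ht
      · have h1 : a = 0 := by
          rw [ha]
          apply hg0
          have := hfst x t
          linarith
        have h2 : g (x', t) = 0 := by
          apply hg0
          have h3 : ‖x‖ ≤ ‖x'‖ + ‖b • e‖ := by
            have hxx : x = x' - b • e := by simp [hx']
            calc ‖x‖ = ‖x' - b • e‖ := by rw [← hxx]
            _ ≤ ‖x'‖ + ‖b • e‖ := norm_sub_le _ _
          have h4 : ‖b • e‖ ≤ C := by rw [hb]; exact hgse _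
          have h5 := hfst x' t
          linarith
        rw [h2, h1]
      · have h2 : b = 0 := by
          rw [hb]
          apply hg0
          have h3 : ‖y‖ ≤ ‖y'‖ + ‖a • e‖ := by
            have hyy : y = y' - a • e := by simp [hy']
            calc ‖y‖ = ‖y' - a • e‖ := by rw [← hyy]
            _ ≤ ‖y'‖ + ‖a • e‖ := norm_sub_le _ _
          have h4 : ‖a • e‖ ≤ C := by rw [ha]; exact hgse _
          have h5 := hfst y' t
          linarith
        have hxx : x' = x := by simp [hx', h2]
        rw [hxx]
      · have hts : ∀ z : Fin N → ℝ, g (z, t) = 0 := by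
          intro z
          apply hg0
          have := hsnd z t
          linarith
        rw [hts x', ha, hts x]
    have hxi : x' i0 = x i0 + b := by
      simp [hx', he, Pi.single_eq_same]
    have hyi : y' i0 = y i0 + a := by
      simp [hy', he, Pi.single_eq_same]
    calc w (x', y', t) = F (x', t) - F (y', t) := hw _ _ _
    _ = (x' i0 + g (x', t)) - (y' i0 + g (y', t)) := by rw [hFg (x', t), hFg (y', t)]
    _ = (x i0 + b + a) - (y i0 + a + b) := by rw [hxi, hyi, key, ← hb]
    _ = x i0 - y i0 := by ring
end

section
/- Let V be a vector space over a field and let d, d' : V → V be linear maps with d ∘ d = 0 and d' ∘ d' = 0. Suppose D ⊆ V is a subspace such that: d(D) ⊆ D and d'(D) ⊆ D; the restricted complexes are acyclic, i.e. ker d ∩ D = d(D) and ker d' ∩ D = d'(D); and d and d' induce the same endomorphism of the quotient V/D, i.e. d(v) − d'(v) ∈ D for every v ∈ V. Then the homologies of the two complexes are isomorphic: ker d / range d ≅ ker d' / range d'. -/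
/-!
Because `D` is acyclic, the projection `V → V/D` is a quasi-isomorphism (the long exact sequence
of `0 → D → V → V/D → 0`): cycles of the quotient lift to cycles, and a cycle that becomes a
boundary in the quotient was a boundary already. As `d` and `d'` induce the same differential on
`V/D`, both homologies are isomorphic to the homology of that one quotient complex.
-/

namespace LinearMap

variable {R V : Type*} [Ring R] [AddCommGroup V] [Module R V]

def boundaries (f : V →ₗ[R] V) : Submodule R (ker f) := (range f).comap (ker f).subtype

theorem mem_boundaries {f : V →ₗ[R] V} {x : ker f} : x ∈ f.boundaries ↔ (x : V) ∈ range f :=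
  Iff.rfl

abbrev Homology (f : V →ₗ[R] V) : Type _ := ker f ⧸ f.boundaries

section ChainMap

variable {W : Type*} [AddCommGroup W] [Module R W]
  {d : V →ₗ[R] V} {e : W →ₗ[R] W} {π : V →ₗ[R] W}

theorem map_mem_ker_of_commute (hπ : ∀ v, π (d v) = e (π v)) {x : V} (hx : x ∈ ker d) :
    π x ∈ ker e := by
  rw [mem_ker, ← hπ, mem_ker.mp hx, map_zero]

theorem map_mem_range_of_commute (hπ : ∀ v, π (d v) = e (π v)) {x : V} (hx : x ∈ range d) :
    π x ∈ range e := by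
  obtain ⟨v, rfl⟩ := hx
  exact ⟨π v, (hπ v).symm⟩

def homologyMap (hπ : ∀ v, π (d v) = e (π v)) : d.Homology →ₗ[R] e.Homology :=
  Submodule.mapQ _ _ (π.restrict fun _ ↦ map_mem_ker_of_commute hπ)
    fun _ hx ↦ map_mem_range_of_commute hπ hx

theorem homologyMap_mk (hπ : ∀ v, π (d v) = e (π v)) (x : ker d) :
    homologyMap hπ (Submodule.Quotient.mk x) =
      Submodule.Quotient.mk ⟨π x, map_mem_ker_of_commute hπ x.2⟩ :=
  rfl

end ChainMap

section Acyclic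

variable {d : V →ₗ[R] V} {D : Submodule R V} {e : V ⧸ D →ₗ[R] V ⧸ D}

theorem exists_mem_ker_mkQ_eq (hd : d ∘ₗ d = 0) (hacy : ker d ⊓ D ≤ D.map d)
    (he : ∀ v, D.mkQ (d v) = e (D.mkQ v)) {y : V ⧸ D} (hy : y ∈ ker e) :
    ∃ x ∈ ker d, D.mkQ x = y := by
  obtain ⟨v, rfl⟩ := D.mkQ_surjective y
  have hdv : d v ∈ ker d ⊓ D := by
    refine Submodule.mem_inf.mpr ⟨LinearMap.congr_fun hd v, ?_⟩
    rw [← Submodule.ker_mkQ D, mem_ker, he, mem_ker.mp hy]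
  obtain ⟨p, hp, hdp⟩ := hacy hdv
  refine ⟨v - p, ?_, ?_⟩
  · rw [mem_ker, map_sub, hdp, sub_self]
  · rw [map_sub, D.mkQ_apply p, (Submodule.Quotient.mk_eq_zero D).mpr hp, sub_zero]

theorem mem_range_of_mkQ_mem_range (hd : d ∘ₗ d = 0) (hacy : ker d ⊓ D ≤ D.map d)
    (he : ∀ v, D.mkQ (d v) = e (D.mkQ v)) {x : V} (hx : x ∈ ker d)
    (hxe : D.mkQ x ∈ range e) : x ∈ range d := by
  obtain ⟨y, hy⟩ := hxe
  obtain ⟨v, rfl⟩ := D.mkQ_surjective y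
  have hxv : x - d v ∈ ker d ⊓ D := by
    refine Submodule.mem_inf.mpr ⟨?_, ?_⟩
    · rw [mem_ker, map_sub, mem_ker.mp hx, ← comp_apply, hd, zero_apply, sub_zero]
    · rw [← Submodule.ker_mkQ D, mem_ker, map_sub, ← hy, he, sub_self]
  obtain ⟨p, -, hdp⟩ := hacy hxv
  exact ⟨p + v, by rw [map_add, hdp, sub_add_cancel]⟩

theorem homologyMap_bijective_of_acyclic (hd : d ∘ₗ d = 0) (hacy : ker d ⊓ D ≤ D.map d)
    (he : ∀ v, D.mkQ (d v) = e (D.mkQ v)) : Function.Bijective (homologyMap he) := by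
  refine ⟨(injective_iff_map_eq_zero _).mpr ?_, ?_⟩
  · intro q hq
    induction q using Submodule.Quotient.induction_on with | _ x
    rw [homologyMap_mk, Submodule.Quotient.mk_eq_zero, mem_boundaries] at hq
    rw [Submodule.Quotient.mk_eq_zero, mem_boundaries]
    exact mem_range_of_mkQ_mem_range hd hacy he x.2 hq
  · intro q
    induction q using Submodule.Quotient.induction_on with | _ y
    obtain ⟨x, hx, hxy⟩ := exists_mem_ker_mkQ_eq hd hacy he y.2
    exact ⟨Submodule.Quotient.mk ⟨x, hx⟩, congrArg Submodule.Quotient.mk (Subtype.ext hxy)⟩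

noncomputable def homologyEquivOfAcyclic (hd : d ∘ₗ d = 0) (hacy : ker d ⊓ D ≤ D.map d)
    (he : ∀ v, D.mkQ (d v) = e (D.mkQ v)) : d.Homology ≃ₗ[R] e.Homology :=
  LinearEquiv.ofBijective (homologyMap he) (homologyMap_bijective_of_acyclic hd hacy he)

end Acyclic

end LinearMap

theorem stmt_10_general {K : Type*} [Field K] {V : Type*} [AddCommGroup V] [Module K V]
    (d d' : V →ₗ[K] V) (hd : d ∘ₗ d = 0) (hd' : d' ∘ₗ d' = 0)
    (D : Submodule K V)
    (hacy : LinearMap.ker d ⊓ D = Submodule.map d D)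
    (hacy' : LinearMap.ker d' ⊓ D = Submodule.map d' D)
    (hquot : ∀ v, d v - d' v ∈ D) :
    Nonempty
      ((LinearMap.ker d ⧸ (LinearMap.range d).comap (LinearMap.ker d).subtype)
        ≃ₗ[K]
       (LinearMap.ker d' ⧸ (LinearMap.range d').comap (LinearMap.ker d').subtype)) := by
  have hdD : D ≤ D.comap d := Submodule.map_le_iff_le_comap.mp (hacy ▸ inf_le_right)
  have hd'_quot : ∀ v, D.mkQ (d' v) = D.mapQ D d hdD (D.mkQ v) := fun v ↦
    ((Submodule.Quotient.eq D).mpr (hquot v)).symm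
  exact ⟨(LinearMap.homologyEquivOfAcyclic hd hacy.le fun _ ↦ rfl).trans
    (LinearMap.homologyEquivOfAcyclic hd' hacy'.le hd'_quot).symm⟩

/-- The key algebraic step in the proof of Lemma 5.7: two differentials on the
same vector space which share a common acyclic subcomplex `D` and induce the
same endomorphism of the quotient `V/D` have isomorphic homology. -/
theorem stmt_10 {K : Type*} [Field K] {V : Type*} [AddCommGroup V] [Module K V]
    (d d' : V →ₗ[K] V) (hd : d ∘ₗ d = 0) (hd' : d' ∘ₗ d' = 0)
    (D : Submodule K V)
    (hdD : Submodule.map d D ≤ D) (hd'D : Submodule.map d' D ≤ D)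
    (hacy : LinearMap.ker d ⊓ D = Submodule.map d D)
    (hacy' : LinearMap.ker d' ⊓ D = Submodule.map d' D)
    (hquot : ∀ v, d v - d' v ∈ D) :
    Nonempty
      ((LinearMap.ker d ⧸ (LinearMap.range d).comap (LinearMap.ker d).subtype)
        ≃ₗ[K]
       (LinearMap.ker d' ⧸ (LinearMap.range d').comap (LinearMap.ker d').subtype)) :=
  stmt_10_general d d' hd hd' D hacy hacy' hquot
end
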